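/- If G is a C_{4k}-free bipartite graph, then the rank of its adjacency matrix equals twice the matching number: rank(G) = 2ν(G). -/

import Mathlib

open scoped Classical

namespace C4kPaper

open SimpleGraph

variable {V : Type*} [Fintype V] [DecidableEq V]

/-- The null space of the adjacency matrix of `G`, as a set of vectors. -/
noncomputable def nullSet (G : SimpleGraph V) : Set (V → ℝ) :=
  {x | Matrix.mulVec (G.adjMatrix ℝ) x = 0}

/-- The null space of the adjacency matrix of `G`, as a submodule of `ℝ^V`. -/
noncomputable def nullModule (G : SimpleGraph V) : Submodule ℝ (V → ℝ) :=
  LinearMap.ker (G.adjMatrix ℝ).mulVecLin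

/-- The nullity of `G`: the dimension of the null space of its adjacency matrix. -/
noncomputable def nullity (G : SimpleGraph V) : ℕ :=
  Module.finrank ℝ (nullModule G)

/-- The rank of the adjacency matrix of `G` over `ℝ`. -/
noncomputable def rk (G : SimpleGraph V) : ℕ :=
  (G.adjMatrix ℝ).rank

/-- The support of `G`: vertices where some null space vector is nonzero. -/
def supp (G : SimpleGraph V) : Set V :=
  {v | ∃ x ∈ nullSet G, x v ≠ 0}

/-- The core of `G`: the neighbors of the support. -/
def core (G : SimpleGraph V) : Set V :=
  {u | ∃ v ∈ supp G, G.Adj u v}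

/-- The N-part of `G`: vertices neither in the support nor in the core. -/
def npart (G : SimpleGraph V) : Set V :=
  (supp G ∪ core G)ᶜ

/-- `G` is bipartite. -/
def IsBipartite (G : SimpleGraph V) : Prop :=
  ∃ s : Set V, ∀ ⦃u v : V⦄, G.Adj u v → (u ∈ s ↔ v ∉ s)

/-- `G` has no cycle whose length is a multiple of 4. -/
def C4kFree (G : SimpleGraph V) : Prop :=
  ∀ (v : V) (c : G.Walk v v), c.IsCycle → ¬ (4 ∣ c.length)

/-- `M` is a maximum matching of `G`. -/
def IsMaximumMatching (G : SimpleGraph V) (M : G.Subgraph) : Prop :=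
  M.IsMatching ∧ ∀ M' : G.Subgraph, M'.IsMatching → M'.edgeSet.ncard ≤ M.edgeSet.ncard

/-- The matching number of `G`. -/
noncomputable def matchNum (G : SimpleGraph V) : ℕ :=
  sSup {n | ∃ M : G.Subgraph, M.IsMatching ∧ M.edgeSet.ncard = n}

/-- `s` is an independent set of `G`. -/
def IsIndep (G : SimpleGraph V) (s : Set V) : Prop :=
  ∀ ⦃u⦄, u ∈ s → ∀ ⦃w⦄, w ∈ s → ¬ G.Adj u w

/-- `s` is a maximum independent set of `G`. -/
def IsMaxIndep (G : SimpleGraph V) (s : Set V) : Prop :=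
  IsIndep G s ∧ ∀ t : Set V, IsIndep G t → t.ncard ≤ s.ncard

/-- The independence number of `G`. -/
noncomputable def indepNum (G : SimpleGraph V) : ℕ :=
  sSup {n | ∃ s : Set V, IsIndep G s ∧ s.ncard = n}

/-- An `(M,x)`-alternating walk `w₀, w₁, …, w_j` (here `w_i = p.getVert i`):
for all `0 ≤ i < ⌊(j-1)/2⌋`, `{w_{2i}, w_{2i+1}} ∈ M` and `x_{w_{2i}} · x_{w_{2i+2}} < 0`. -/
def MxAltWalk (G : SimpleGraph V) (M : G.Subgraph) (x : V → ℝ) {v u : V}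
    (p : G.Walk v u) : Prop :=
  ∀ i : ℕ, i < (p.length - 1) / 2 →
    M.Adj (p.getVert (2 * i)) (p.getVert (2 * i + 1)) ∧
      x (p.getVert (2 * i)) * x (p.getVert (2 * i + 2)) < 0

/-- A maximal `(M,x)`-alternating walk: one not properly contained in a longer
`(M,x)`-alternating walk from the same start. -/
def MaximalMxAltWalk (G : SimpleGraph V) (M : G.Subgraph) (x : V → ℝ) {v u : V}
    (p : G.Walk v u) : Prop :=
  MxAltWalk G M x p ∧
    ∀ (u' : V) (q : G.Walk v u'), MxAltWalk G M x q → p.support <+: q.support →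
      q.length = p.length

/-- An `M`-alternating walk starting with an edge not in `M`:
the `i`-th edge belongs to `M` iff `i` is odd. -/
def MAltWalk (G : SimpleGraph V) (M : G.Subgraph) {v u : V} (p : G.Walk v u) : Prop :=
  ∀ i : ℕ, i < p.length → (M.Adj (p.getVert i) (p.getVert (i + 1)) ↔ Odd i)

/-- Vertices reachable from `v` by an even-length `M`-alternating path. -/
def Re (G : SimpleGraph V) (M : G.Subgraph) (v : V) : Set V :=
  {u | ∃ p : G.Walk v u, p.IsPath ∧ MAltWalk G M p ∧ Even p.length}

/-- Vertices reachable from `v` by an odd-length `M`-alternating path. -/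
def Ro (G : SimpleGraph V) (M : G.Subgraph) (v : V) : Set V :=
  {u | ∃ p : G.Walk v u, p.IsPath ∧ MAltWalk G M p ∧ Odd p.length}


section AuxLemmas
set_option maxHeartbeats 1600000
set_option linter.unusedSectionVars false
open Matrix

lemma matchSet_bdd (G : SimpleGraph V) :
    BddAbove {n | ∃ M : G.Subgraph, M.IsMatching ∧ M.edgeSet.ncard = n} := by
  refine ⟨Fintype.card (Sym2 V), fun n hn => ?_⟩
  obtain ⟨M, -, rfl⟩ := hn
  calc M.edgeSet.ncard ≤ (Set.univ : Set (Sym2 V)).ncard :=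
        Set.ncard_le_ncard (Set.subset_univ _) Set.finite_univ
    _ = Fintype.card (Sym2 V) := by rw [Set.ncard_univ, Nat.card_eq_fintype_card]

lemma matchSet_nonempty (G : SimpleGraph V) :
    Set.Nonempty {n | ∃ M : G.Subgraph, M.IsMatching ∧ M.edgeSet.ncard = n} := by
  refine ⟨0, ⊥, ?_, ?_⟩
  · intro v hv
    simp at hv
  · simp

lemma exists_maximum_matching (G : SimpleGraph V) :
    ∃ M : G.Subgraph, M.IsMatching ∧ M.edgeSet.ncard = matchNum G :=
  Nat.sSup_mem (matchSet_nonempty G) (matchSet_bdd G)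

lemma ncard_le_matchNum (G : SimpleGraph V) {M : G.Subgraph} (h : M.IsMatching) :
    M.edgeSet.ncard ≤ matchNum G :=
  le_csSup (matchSet_bdd G) ⟨M, h, rfl⟩

/-- Build a matching from a system of `r` pairwise disjoint edges. -/
lemma matching_of_edges (G : SimpleGraph V) {r : ℕ} (u w : Fin r → V)
    (hu : Function.Injective u) (hw : Function.Injective w)
    (hd : ∀ i j, u i ≠ w j) (ha : ∀ i, G.Adj (u i) (w i)) :
    ∃ M : G.Subgraph, M.IsMatching ∧ M.edgeSet.ncard = r := by
  refine ⟨⟨Set.range u ∪ Set.range w,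
    fun a b => ∃ i, (a = u i ∧ b = w i) ∨ (a = w i ∧ b = u i), ?_, ?_, ?_⟩, ?_, ?_⟩
  · rintro a b ⟨i, ⟨rfl, rfl⟩ | ⟨rfl, rfl⟩⟩
    · exact ha i
    · exact (ha i).symm
  · rintro a b ⟨i, ⟨rfl, rfl⟩ | ⟨rfl, rfl⟩⟩
    · exact Or.inl ⟨i, rfl⟩
    · exact Or.inr ⟨i, rfl⟩
  · refine ⟨?_⟩; rintro a b ⟨i, ⟨rfl, rfl⟩ | ⟨rfl, rfl⟩⟩
    · exact ⟨i, Or.inr ⟨rfl, rfl⟩⟩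
    · exact ⟨i, Or.inl ⟨rfl, rfl⟩⟩
  · rintro v (⟨i, rfl⟩ | ⟨i, rfl⟩)
    · refine ⟨w i, ⟨i, Or.inl ⟨rfl, rfl⟩⟩, ?_⟩
      rintro b ⟨j, ⟨hj1, rfl⟩ | ⟨hj1, rfl⟩⟩
      · rw [hu hj1.symm]
      · exact absurd hj1 (hd i j)
    · refine ⟨u i, ⟨i, Or.inr ⟨rfl, rfl⟩⟩, ?_⟩
      rintro b ⟨j, ⟨hj1, rfl⟩ | ⟨hj1, rfl⟩⟩
      · exact absurd hj1.symm (hd j i)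
      · rw [hw hj1.symm]
  · have hset : (⟨Set.range u ∪ Set.range w,
        fun a b => ∃ i, (a = u i ∧ b = w i) ∨ (a = w i ∧ b = u i), by
          rintro a b ⟨i, ⟨rfl, rfl⟩ | ⟨rfl, rfl⟩⟩
          exacts [ha i, (ha i).symm], by
          rintro a b ⟨i, ⟨rfl, rfl⟩ | ⟨rfl, rfl⟩⟩
          exacts [Or.inl ⟨i, rfl⟩, Or.inr ⟨i, rfl⟩], by
          refine ⟨?_⟩; rintro a b ⟨i, ⟨rfl, rfl⟩ | ⟨rfl, rfl⟩⟩
          exacts [⟨i, Or.inr ⟨rfl, rfl⟩⟩, ⟨i, Or.inl ⟨rfl, rfl⟩⟩]⟩ :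
        G.Subgraph).edgeSet = Set.range (fun i => s(u i, w i)) := by
      ext e
      induction e with
      | _ a b =>
        simp only [Subgraph.mem_edgeSet, Set.mem_range]
        constructor
        · rintro ⟨i, ⟨rfl, rfl⟩ | ⟨rfl, rfl⟩⟩
          · exact ⟨i, rfl⟩
          · exact ⟨i, Sym2.eq_swap⟩
        · rintro ⟨i, hi⟩
          rw [Sym2.eq_iff] at hi
          rcases hi with ⟨rfl, rfl⟩ | ⟨rfl, rfl⟩
          · exact ⟨i, Or.inl ⟨rfl, rfl⟩⟩
          · exact ⟨i, Or.inr ⟨rfl, rfl⟩⟩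
    rw [hset]
    have hinj : Function.Injective (fun i => s(u i, w i)) := by
      intro i j hij
      simp only [Sym2.eq_iff] at hij
      rcases hij with ⟨h1, -⟩ | ⟨h1, -⟩
      · exact hu h1
      · exact absurd h1 (hd i j)
    rw [Set.ncard_eq_toFinset_card', Set.toFinset_range,
      Finset.card_image_of_injective _ hinj, Finset.card_univ, Fintype.card_fin]

/-- Represent a matching in a bipartite graph by two injective families of endpoints. -/
lemma matching_repr (G : SimpleGraph V) {s : Set V}
    (hbs : ∀ ⦃u v : V⦄, G.Adj u v → (u ∈ s ↔ v ∉ s)) {M : G.Subgraph}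
    (hM : M.IsMatching) {r : ℕ} (hr : M.edgeSet.ncard = r) :
    ∃ p q : Fin r → V, Function.Injective p ∧ Function.Injective q ∧
      (∀ i, p i ∈ s) ∧ (∀ i, q i ∉ s) ∧ (∀ i, M.Adj (p i) (q i)) := by
  have hfin : M.edgeSet.Finite := Set.toFinite _
  have hcard : hfin.toFinset.card = r := by
    rw [← hr, Set.ncard_eq_toFinset_card _ hfin]
  let E := Finset.equivFinOfCardEq hcard
  -- for each edge choose an oriented pair of endpoints
  have hch : ∀ e : hfin.toFinset, ∃ a b : V, a ∈ s ∧ b ∉ s ∧ M.Adj a b ∧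
      (e : Sym2 V) = s(a, b) := by
    rintro ⟨e, he⟩
    rw [Set.Finite.mem_toFinset] at he
    induction e with
    | _ x y =>
      have hxy : M.Adj x y := Subgraph.mem_edgeSet.mp he
      have hG : G.Adj x y := hxy.adj_sub
      by_cases hx : x ∈ s
      · exact ⟨x, y, hx, (hbs hG).mp hx, hxy, rfl⟩
      · have hy : y ∈ s := by
          by_contra hy
          exact hx ((hbs hG).mpr hy)
        exact ⟨y, x, hy, hx, hxy.symm, Sym2.eq_swap⟩
  choose a b has hbs' hadj hedge using hch
  refine ⟨fun i => a (E.symm i), fun i => b (E.symm i), ?_, ?_,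
    fun i => has _, fun i => hbs' _, fun i => hadj _⟩
  · intro i j hij
    replace hij : a (E.symm i) = a (E.symm j) := hij
    have h1 := hadj (E.symm i)
    have h2 := hadj (E.symm j)
    rw [hij] at h1
    -- unique partner of a (E.symm j)
    obtain ⟨w, -, huniq⟩ := hM (h2.fst_mem)
    have hb : b (E.symm i) = b (E.symm j) := by
      rw [huniq _ h1, huniq _ h2]
    have : (E.symm i : Sym2 V) = (E.symm j : Sym2 V) := by
      rw [hedge, hedge, hij, hb]
    have := Subtype.ext this
    simpa using congrArg E this
  · intro i j hij
    replace hij : b (E.symm i) = b (E.symm j) := hij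
    have h1 := (hadj (E.symm i)).symm
    have h2 := (hadj (E.symm j)).symm
    rw [hij] at h1
    obtain ⟨w, -, huniq⟩ := hM (h2.fst_mem)
    have hb : a (E.symm i) = a (E.symm j) := by
      rw [huniq _ h1, huniq _ h2]
    have : (E.symm i : Sym2 V) = (E.symm j : Sym2 V) := by
      rw [hedge, hedge, hij, hb]
    have := Subtype.ext this
    simpa using congrArg E this

def zF (a b : ℕ → V) (t : ℕ) : V := if t % 2 = 0 then b (t / 2) else a (t / 2 + 1)

def zE (a b : ℕ → V) (t : ℕ) : Sym2 V :=
  if t % 2 = 0 then s(a (t / 2), b (t / 2)) else s(b (t / 2), a (t / 2 + 1))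

lemma map_range_succ {α : Type*} (f : ℕ → α) (n : ℕ) :
    (List.range (n + 1)).map f = (List.range n).map f ++ [f n] := by
  rw [List.range_succ, List.map_append]; simp

lemma exists_cycle_zigzag (G : SimpleGraph V) (m : ℕ) (hm : 2 ≤ m) (a b : ℕ → V)
    (hab : ∀ k, k < m → G.Adj (a k) (b k))
    (hba : ∀ k, k < m → G.Adj (b k) (a (k + 1)))
    (ham : a m = a 0)
    (hainj : ∀ k l, k < m → l < m → a k = a l → k = l)
    (hbinj : ∀ k l, k < m → l < m → b k = b l → k = l)
    (hdisj : ∀ k l, a k ≠ b l) :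
    ∃ w : G.Walk (a 0) (a 0), w.IsCycle ∧ w.length = 2 * m := by
  -- comparison of a-values up to index m
  have haeq : ∀ x y, x ≤ m → y ≤ m → a x = a y → x = y ∨ (x = 0 ∧ y = m) ∨ (x = m ∧ y = 0) := by
    intro x y hx hy h
    rcases eq_or_lt_of_le hx with rfl | hx'
    · rcases eq_or_lt_of_le hy with rfl | hy'
      · exact Or.inl rfl
      · rw [ham] at h
        exact Or.inr (Or.inr ⟨rfl, (hainj 0 y (by omega) hy' h).symm⟩)
    · rcases eq_or_lt_of_le hy with rfl | hy'
      · rw [ham] at h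
        exact Or.inr (Or.inl ⟨hainj x 0 hx' (by omega) h, rfl⟩)
      · exact Or.inl (hainj x y hx' hy' h)
  have hFinj : ∀ t t', t < 2 * m - 1 → t' < 2 * m - 1 → zF a b t = zF a b t' → t = t' := by
    intro t t' ht ht' h
    rcases Nat.even_or_odd t with ⟨u, hu⟩ | ⟨u, hu⟩ <;>
      rcases Nat.even_or_odd t' with ⟨v, hv⟩ | ⟨v, hv⟩
    · have e1 : zF a b t = b u := by
        have h1 : t % 2 = 0 := by omega
        have h2 : t / 2 = u := by omega
        simp [zF, h1, h2]
      have e2 : zF a b t' = b v := by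
        have h1 : t' % 2 = 0 := by omega
        have h2 : t' / 2 = v := by omega
        simp [zF, h1, h2]
      rw [e1, e2] at h
      have := hbinj u v (by omega) (by omega) h
      omega
    · have e1 : zF a b t = b u := by
        have h1 : t % 2 = 0 := by omega
        have h2 : t / 2 = u := by omega
        simp [zF, h1, h2]
      have e2 : zF a b t' = a (v + 1) := by
        have h1 : t' % 2 = 1 := by omega
        have h2 : t' / 2 = v := by omega
        simp [zF, h1, h2]
      rw [e1, e2] at h
      exact absurd h.symm (hdisj _ _)
    · have e1 : zF a b t = a (u + 1) := by
        have h1 : t % 2 = 1 := by omega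
        have h2 : t / 2 = u := by omega
        simp [zF, h1, h2]
      have e2 : zF a b t' = b v := by
        have h1 : t' % 2 = 0 := by omega
        have h2 : t' / 2 = v := by omega
        simp [zF, h1, h2]
      rw [e1, e2] at h
      exact absurd h (hdisj _ _)
    · have e1 : zF a b t = a (u + 1) := by
        have h1 : t % 2 = 1 := by omega
        have h2 : t / 2 = u := by omega
        simp [zF, h1, h2]
      have e2 : zF a b t' = a (v + 1) := by
        have h1 : t' % 2 = 1 := by omega
        have h2 : t' / 2 = v := by omega
        simp [zF, h1, h2]
      rw [e1, e2] at h
      have := hainj (u + 1) (v + 1) (by omega) (by omega) h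
      omega
  have hEinj : ∀ t t', t < 2 * m → t' < 2 * m → zE a b t = zE a b t' → t = t' := by
    intro t t' ht ht' h
    rcases Nat.even_or_odd t with ⟨u, hu⟩ | ⟨u, hu⟩ <;>
      rcases Nat.even_or_odd t' with ⟨v, hv⟩ | ⟨v, hv⟩
    · have e1 : zE a b t = s(a u, b u) := by
        have h1 : t % 2 = 0 := by omega
        have h2 : t / 2 = u := by omega
        simp [zE, h1, h2]
      have e2 : zE a b t' = s(a v, b v) := by
        have h1 : t' % 2 = 0 := by omega
        have h2 : t' / 2 = v := by omega
        simp [zE, h1, h2]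
      rw [e1, e2, Sym2.eq_iff] at h
      rcases h with ⟨-, h2⟩ | ⟨h1, -⟩
      · have := hbinj u v (by omega) (by omega) h2
        omega
      · exact absurd h1 (hdisj _ _)
    · have e1 : zE a b t = s(a u, b u) := by
        have h1 : t % 2 = 0 := by omega
        have h2 : t / 2 = u := by omega
        simp [zE, h1, h2]
      have e2 : zE a b t' = s(b v, a (v + 1)) := by
        have h1 : t' % 2 = 1 := by omega
        have h2 : t' / 2 = v := by omega
        simp [zE, h1, h2]
      rw [e1, e2, Sym2.eq_iff] at h
      rcases h with ⟨h1, -⟩ | ⟨h1, h2⟩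
      · exact absurd h1 (hdisj _ _)
      · -- h1 : a u = a (v+1), h2 : b u = b v
        have huv := hbinj u v (by omega) (by omega) h2
        subst huv
        rcases haeq u (u + 1) (by omega) (by omega) h1 with h | ⟨h1', h2'⟩ | ⟨h1', h2'⟩ <;> omega
    · have e1 : zE a b t = s(b u, a (u + 1)) := by
        have h1 : t % 2 = 1 := by omega
        have h2 : t / 2 = u := by omega
        simp [zE, h1, h2]
      have e2 : zE a b t' = s(a v, b v) := by
        have h1 : t' % 2 = 0 := by omega
        have h2 : t' / 2 = v := by omega
        simp [zE, h1, h2]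
      rw [e1, e2, Sym2.eq_iff] at h
      rcases h with ⟨h1, -⟩ | ⟨h1, h2⟩
      · exact absurd h1.symm (hdisj _ _)
      · have huv := hbinj u v (by omega) (by omega) h1
        subst huv
        rcases haeq (u + 1) u (by omega) (by omega) h2 with h | ⟨h1', h2'⟩ | ⟨h1', h2'⟩ <;> omega
    · have e1 : zE a b t = s(b u, a (u + 1)) := by
        have h1 : t % 2 = 1 := by omega
        have h2 : t / 2 = u := by omega
        simp [zE, h1, h2]
      have e2 : zE a b t' = s(b v, a (v + 1)) := by
        have h1 : t' % 2 = 1 := by omega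
        have h2 : t' / 2 = v := by omega
        simp [zE, h1, h2]
      rw [e1, e2, Sym2.eq_iff] at h
      rcases h with ⟨h1, -⟩ | ⟨h1, -⟩
      · have := hbinj u v (by omega) (by omega) h1
        omega
      · exact absurd h1.symm (hdisj _ _)
  -- construct the zigzag walk
  have claim : ∀ k, k < m → ∃ w : G.Walk (a 0) (b k),
      w.support = a 0 :: (List.range (2 * k + 1)).map (zF a b) ∧
      w.edges = (List.range (2 * k + 1)).map (zE a b) := by
    intro k
    induction k with
    | zero =>
      intro hk
      refine ⟨Walk.cons (hab 0 hk) Walk.nil, ?_, ?_⟩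
      · rw [show List.range 1 = [0] from rfl]
        simp [zF]
      · rw [show List.range 1 = [0] from rfl]
        simp [zE]
    | succ k ih =>
      intro hk
      obtain ⟨w, hs, he⟩ := ih (by omega)
      refine ⟨(w.concat (hba k (by omega))).concat (hab (k + 1) hk), ?_, ?_⟩
      · rw [Walk.support_concat, Walk.support_concat, hs]
        have h1 : zF a b (2 * k + 1) = a (k + 1) := by
          have e1 : (2 * k + 1) % 2 = 1 := by omega
          have e2 : (2 * k + 1) / 2 = k := by omega
          simp [zF, e1, e2]
        have h2 : zF a b (2 * k + 2) = b (k + 1) := by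
          have e1 : (2 * k + 2) % 2 = 0 := by omega
          have e2 : (2 * k + 2) / 2 = k + 1 := by omega
          simp [zF, e1, e2]
        have h3 : (List.range (2 * (k + 1) + 1)).map (zF a b) =
            (List.range (2 * k + 1)).map (zF a b) ++ [a (k + 1), b (k + 1)] := by
          have e3 : 2 * (k + 1) + 1 = (2 * k + 1 + 1) + 1 := by ring
          rw [e3, map_range_succ, map_range_succ]
          have e4 : 2 * k + 1 + 1 = 2 * k + 2 := by ring
          rw [e4, h1, h2, List.append_assoc]
          rfl
        rw [h3]
        simp
      · rw [Walk.edges_concat, Walk.edges_concat, he]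
        have h1 : zE a b (2 * k + 1) = s(b k, a (k + 1)) := by
          have e1 : (2 * k + 1) % 2 = 1 := by omega
          have e2 : (2 * k + 1) / 2 = k := by omega
          simp [zE, e1, e2]
        have h2 : zE a b (2 * k + 2) = s(a (k + 1), b (k + 1)) := by
          have e1 : (2 * k + 2) % 2 = 0 := by omega
          have e2 : (2 * k + 2) / 2 = k + 1 := by omega
          simp [zE, e1, e2]
        have h3 : (List.range (2 * (k + 1) + 1)).map (zE a b) =
            (List.range (2 * k + 1)).map (zE a b) ++ [s(b k, a (k + 1)), s(a (k + 1), b (k + 1))] := by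
          have e3 : 2 * (k + 1) + 1 = (2 * k + 1 + 1) + 1 := by ring
          rw [e3, map_range_succ, map_range_succ]
          have e4 : 2 * k + 1 + 1 = 2 * k + 2 := by ring
          rw [e4, h1, h2, List.append_assoc]
          rfl
        rw [h3, List.concat_eq_append, List.concat_eq_append]
        simp
  obtain ⟨K, hK⟩ : ∃ K, K + 1 = m := ⟨m - 1, by omega⟩
  obtain ⟨w, hs, he⟩ := claim K (by omega)
  have hcopy : a (K + 1) = a 0 := by rw [hK, ham]
  refine ⟨(w.concat (hba K (by omega))).copy rfl hcopy, ?_, ?_⟩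
  · rw [Walk.isCycle_def]
    have hsup : ((w.concat (hba K (by omega))).copy rfl hcopy).support =
        (a 0 :: (List.range (2 * K + 1)).map (zF a b)) ++ [a (K + 1)] := by
      rw [Walk.support_copy, Walk.support_concat, hs]
    have hedg : ((w.concat (hba K (by omega))).copy rfl hcopy).edges =
        (List.range (2 * K + 2)).map (zE a b) := by
      rw [Walk.edges_copy, Walk.edges_concat, he, List.concat_eq_append]
      have h1 : zE a b (2 * K + 1) = s(b K, a (K + 1)) := by
        have e1 : (2 * K + 1) % 2 = 1 := by omega
        have e2 : (2 * K + 1) / 2 = K := by omega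
        simp [zE, e1, e2]
      have h3 : (List.range (2 * K + 2)).map (zE a b) =
          (List.range (2 * K + 1)).map (zE a b) ++ [s(b K, a (K + 1))] := by
        have e3 : 2 * K + 2 = (2 * K + 1) + 1 := by ring
        rw [e3, map_range_succ, h1]
      rw [h3]
    refine ⟨?_, ?_, ?_⟩
    · rw [Walk.isTrail_def, hedg]
      refine List.Nodup.map_on ?_ List.nodup_range
      intro t ht t' ht' hE
      rw [List.mem_range] at ht ht'
      exact hEinj t t' (by omega) (by omega) hE
    · intro hnil
      have := congrArg Walk.length hnil
      rw [Walk.length_copy, Walk.length_concat] at this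
      simp at this
    · rw [hsup]
      simp only [List.cons_append, List.tail_cons]
      rw [List.nodup_append]
      refine ⟨?_, List.nodup_singleton _, ?_⟩
      · refine List.Nodup.map_on ?_ List.nodup_range
        intro t ht t' ht' hF
        rw [List.mem_range] at ht ht'
        exact hFinj t t' (by omega) (by omega) hF
      · intro x hx y hx' hxy
        rw [List.mem_singleton] at hx'
        subst hx' hxy
        rw [List.mem_map] at hx
        obtain ⟨t, ht, hFt⟩ := hx
        rw [List.mem_range] at ht
        rcases Nat.even_or_odd t with ⟨u, hu⟩ | ⟨u, hu⟩
        · have e1 : zF a b t = b u := by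
            have h1 : t % 2 = 0 := by omega
            have h2 : t / 2 = u := by omega
            simp [zF, h1, h2]
          rw [e1] at hFt
          exact hdisj (K + 1) u hFt.symm
        · have e1 : zF a b t = a (u + 1) := by
            have h1 : t % 2 = 1 := by omega
            have h2 : t / 2 = u := by omega
            simp [zF, h1, h2]
          rw [e1] at hFt
          rcases haeq (u + 1) (K + 1) (by omega) (by omega) hFt with hh | ⟨h1', h2'⟩ | ⟨h1', h2'⟩ <;>
            omega
  · rw [Walk.length_copy, Walk.length_concat]
    have : w.length = w.edges.length := (Walk.length_edges w).symm
    rw [this, he, List.length_map, List.length_range]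
    omega

lemma sign_eq_one (G : SimpleGraph V)
    (hc : ∀ (v : V) (c : G.Walk v v), c.IsCycle → ¬ (4 ∣ c.length))
    {r : ℕ} (p q : Fin r → V) (hpinj : Function.Injective p)
    (hqinj : Function.Injective q) (hdisj : ∀ i j, p i ≠ q j)
    (hM : ∀ i, G.Adj (p i) (q i)) (σ : Equiv.Perm (Fin r))
    (hσ : ∀ i, G.Adj (p (σ i)) (q i)) :
    Equiv.Perm.sign σ = 1 := by
  rw [← Equiv.Perm.cycleFactorsFinset_noncommProd σ]
  rw [Finset.map_noncommProd, Finset.noncommProd_eq_prod]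
  refine Finset.prod_eq_one ?_
  intro c hcmem
  obtain ⟨hcyc, hagree⟩ := Equiv.Perm.mem_cycleFactorsFinset_iff.mp hcmem
  set m := c.support.card with hmdef
  have hm2 : 2 ≤ m := hcyc.two_le_card_support
  obtain ⟨i, hi⟩ : ∃ i, i ∈ c.support := Finset.card_pos.mp (by omega) |>.exists_mem
  have hcycleOn : c.IsCycleOn ↑c.support := by
    have := hcyc.isCycleOn
    rwa [← Equiv.Perm.coe_support_eq_set_support] at this
  set j : ℕ → Fin r := fun k => (c ^ k) i with hjdef
  have hjmem : ∀ k, j k ∈ c.support := fun k => Equiv.Perm.pow_apply_mem_support.mpr hi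
  have hjm : j m = i := (hcycleOn.pow_apply_eq hi).mpr dvd_rfl
  have hj0 : j 0 = i := by simp [hjdef]
  have hjinj : ∀ k l, k < m → l < m → j k = j l → k = l := by
    have key : ∀ k l, k ≤ l → l < m → j k = j l → k = l := by
      intro k l hkl hl h
      have e : c ^ l = c ^ k * c ^ (l - k) := by
        rw [← pow_add]
        congr 1
        omega
      have hpow : (c ^ l) i = (c ^ k) ((c ^ (l - k)) i) := by
        rw [e, Equiv.Perm.mul_apply]
      have : (c ^ (l - k)) i = i := by
        apply (c ^ k).injective
        rw [← hpow]
        exact h.symm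
      have hdvd := (hcycleOn.pow_apply_eq hi).mp this
      have h0 := Nat.eq_zero_of_dvd_of_lt hdvd
      rcases Nat.eq_zero_or_pos (l - k) with hz | hpos
      · omega
      · have := Nat.le_of_dvd hpos hdvd
        omega
    intro k l hk hl h
    rcases le_or_gt k l with hkl | hkl
    · exact key k l hkl hl h
    · exact (key l k (le_of_lt hkl) hk h.symm).symm
  have hj1 : ∀ k, j (k + 1) = σ (j k) := by
    intro k
    have : j (k + 1) = c (j k) := by
      simp only [hjdef]
      rw [pow_succ', Equiv.Perm.mul_apply]
    rw [this, hagree (j k) (hjmem k)]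
  obtain ⟨w, hwcyc, hwlen⟩ := exists_cycle_zigzag G m hm2
    (fun k => p (j k)) (fun k => q (j k))
    (fun k _ => hM (j k))
    (fun k _ => by
      show G.Adj (q (j k)) (p (j (k + 1)))
      rw [hj1 k]
      exact (hσ (j k)).symm)
    (by
      show p (j m) = p (j 0)
      rw [hjm, hj0])
    (fun k l hk hl h => hjinj k l hk hl (hpinj h))
    (fun k l hk hl h => hjinj k l hk hl (hqinj h))
    (fun k l => hdisj (j k) (j l))
  have hn4 := hc _ w hwcyc
  rw [hwlen] at hn4
  have hodd : Odd m := by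
    rcases Nat.even_or_odd m with ⟨t, ht⟩ | ho
    · exact absurd (by omega) hn4
    · exact ho
  simp only [id_eq]
  rw [hcyc.sign, ← hmdef, Odd.neg_one_pow hodd, neg_neg]

lemma rank_mul_mul_le {ι κ ι' κ' : Type*} [Fintype ι] [Fintype κ] [Fintype ι'] [Fintype κ']
    (P : Matrix ι' ι ℝ) (M : Matrix ι κ ℝ) (Q : Matrix κ κ' ℝ) :
    (P * M * Q).rank ≤ M.rank :=
  le_trans (Matrix.rank_mul_le_left _ _) (Matrix.rank_mul_le_right _ _)

lemma rank_submatrix_le' {ι κ : Type*} [Fintype ι] [Fintype κ]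
    (A : Matrix V V ℝ) (f : ι → V) (g : κ → V) :
    (A.submatrix f g).rank ≤ A.rank := by
  have key : A.submatrix f g =
      (Matrix.of fun (i : ι) (v : V) => if v = f i then (1 : ℝ) else 0) * A *
        (Matrix.of fun (v : V) (j : κ) => if v = g j then (1 : ℝ) else 0) := by
    ext i j
    simp only [Matrix.mul_apply, Matrix.of_apply, Matrix.submatrix_apply]
    simp [ite_mul, mul_ite, Finset.sum_ite_eq, Finset.sum_ite_eq']
  rw [key]
  exact rank_mul_mul_le _ _ _

lemma matrix_rank_add_le {ι κ : Type*} [Fintype ι] [Fintype κ] (A B : Matrix ι κ ℝ) :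
    (A + B).rank ≤ A.rank + B.rank := by
  unfold Matrix.rank
  have hr : LinearMap.range (A + B).mulVecLin ≤
      LinearMap.range A.mulVecLin ⊔ LinearMap.range B.mulVecLin := by
    rw [Matrix.mulVecLin_add]
    rintro x ⟨v, rfl⟩
    exact Submodule.mem_sup.mpr ⟨A.mulVecLin v, ⟨v, rfl⟩, B.mulVecLin v, ⟨v, rfl⟩, rfl⟩
  calc Module.finrank ℝ ↥(LinearMap.range (A + B).mulVecLin)
      ≤ Module.finrank ℝ ↥(LinearMap.range A.mulVecLin ⊔ LinearMap.range B.mulVecLin) :=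
        Submodule.finrank_mono hr
    _ ≤ _ := Submodule.finrank_add_le_finrank_add_finrank _ _

lemma rank_fromBlocks_zero_le {n o l m : Type*} [Fintype n] [Fintype o] [Fintype l] [Fintype m]
    [DecidableEq n] [DecidableEq o] [DecidableEq l] [DecidableEq m]
    (B : Matrix n m ℝ) (C : Matrix o l ℝ) :
    (Matrix.fromBlocks 0 B C 0).rank ≤ B.rank + C.rank := by
  have hsplit : Matrix.fromBlocks (0 : Matrix n l ℝ) B C (0 : Matrix o m ℝ) =
      Matrix.fromBlocks 0 B 0 0 + Matrix.fromBlocks 0 0 C 0 := by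
    rw [Matrix.fromBlocks_add]
    simp
  have hB : Matrix.fromBlocks (0 : Matrix n l ℝ) B 0 0 =
      (Matrix.of fun (x : n ⊕ o) (u : n) => if x = Sum.inl u then (1 : ℝ) else 0) * B *
        (Matrix.of fun (w : m) (y : l ⊕ m) => if y = Sum.inr w then (1 : ℝ) else 0) := by
    ext x y
    rcases x with u | u <;> rcases y with w | w <;>
      simp [Matrix.mul_apply, Matrix.fromBlocks, Finset.sum_mul, ite_mul, mul_ite]
  have hC : Matrix.fromBlocks (0 : Matrix n l ℝ) 0 C 0 =
      (Matrix.of fun (x : n ⊕ o) (u : o) => if x = Sum.inr u then (1 : ℝ) else 0) * C *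
        (Matrix.of fun (w : l) (y : l ⊕ m) => if y = Sum.inl w then (1 : ℝ) else 0) := by
    ext x y
    rcases x with u | u <;> rcases y with w | w <;>
      simp [Matrix.mul_apply, Matrix.fromBlocks, Finset.sum_mul, ite_mul, mul_ite]
  calc (Matrix.fromBlocks 0 B C 0).rank
      ≤ (Matrix.fromBlocks (0 : Matrix n l ℝ) B 0 0).rank +
        (Matrix.fromBlocks (0 : Matrix n l ℝ) 0 C 0).rank := by
        rw [hsplit] at *
        exact matrix_rank_add_le _ _
    _ ≤ B.rank + C.rank := by
        rw [hB, hC]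
        exact add_le_add (rank_mul_mul_le _ _ _) (rank_mul_mul_le _ _ _)

lemma exists_independent_cols {ι κ : Type*} [Fintype ι] [Fintype κ]
    (W : Matrix ι κ ℝ) {r : ℕ} (hr : W.rank = r) :
    ∃ g : Fin r → κ, Function.Injective g ∧ LinearIndependent ℝ (fun k => Wᵀ (g k)) := by
  obtain ⟨t, hts, hspan, hli⟩ := exists_linearIndependent ℝ (Set.range Wᵀ)
  have htfin : t.Finite := (Set.finite_range Wᵀ).subset hts
  haveI : Fintype t := htfin.fintype
  have hcard : t.toFinset.card = r := by
    rw [← finrank_span_set_eq_card hli, hspan, show Set.range Wᵀ = Set.range W.col from rfl,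
      ← Matrix.rank_eq_finrank_span_cols, hr]
  let E := Finset.equivFinOfCardEq hcard
  have hch : ∀ x : {x // x ∈ t.toFinset}, ∃ j : κ, Wᵀ j = (x : ι → ℝ) := by
    rintro ⟨x, hx⟩
    exact hts (Set.mem_toFinset.mp hx)
  choose gfun hgfun using hch
  refine ⟨fun k => gfun (E.symm k), ?_, ?_⟩
  · intro k l hkl
    replace hkl : gfun (E.symm k) = gfun (E.symm l) := hkl
    have : Wᵀ (gfun (E.symm k)) = Wᵀ (gfun (E.symm l)) := by rw [hkl]
    rw [hgfun, hgfun] at this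
    have := Subtype.ext this
    simpa using congrArg E this
  · have heq : (fun k => Wᵀ (gfun (E.symm k))) =
        (Subtype.val : t → ι → ℝ) ∘ (fun k => ⟨(E.symm k : ι → ℝ),
          Set.mem_toFinset.mp (E.symm k).2⟩) := by
      funext k
      simp [hgfun]
    rw [heq]
    refine hli.comp _ ?_
    intro k l hkl
    replace hkl : (⟨(E.symm k : ι → ℝ), Set.mem_toFinset.mp (E.symm k).2⟩ : t) =
        ⟨(E.symm l : ι → ℝ), Set.mem_toFinset.mp (E.symm l).2⟩ := hkl
    have h2 := congrArg (Subtype.val : t → ι → ℝ) hkl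
    have h3 : E.symm k = E.symm l := Subtype.ext h2
    simpa using congrArg E h3

lemma exists_nonsingular_submatrix {ι κ : Type*} [Fintype ι] [Fintype κ]
    [DecidableEq ι] [DecidableEq κ] (W : Matrix ι κ ℝ) {r : ℕ} (hr : W.rank = r) :
    ∃ (f : Fin r → ι) (g : Fin r → κ), Function.Injective f ∧ Function.Injective g ∧
      (W.submatrix f g).det ≠ 0 := by
  obtain ⟨g, hginj, hgli⟩ := exists_independent_cols W hr
  have h₁ : (W.submatrix id g).rank = r := by
    rw [Matrix.rank_eq_finrank_span_cols]
    have hWT : (W.submatrix id g).col = fun k => Wᵀ (g k) := rfl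
    rw [hWT]
    rw [finrank_span_eq_card hgli]
    simp
  have h₂ : ((W.submatrix id g)ᵀ).rank = r := by rw [Matrix.rank_transpose, h₁]
  obtain ⟨f, hfinj, hfli⟩ := exists_independent_cols (W.submatrix id g)ᵀ h₂
  refine ⟨f, g, hfinj, hginj, ?_⟩
  have hunit : IsUnit (W.submatrix f g) := by
    rw [← Matrix.linearIndependent_rows_iff_isUnit]
    have : (W.submatrix f g).row = fun k => ((W.submatrix id g)ᵀ)ᵀ (f k) := rfl
    rw [this]
    exact hfli
  intro hdet
  rw [Matrix.isUnit_iff_isUnit_det, isUnit_iff_ne_zero] at hunit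
  exact hunit hdet

lemma exists_perm_of_det_ne_zero {n : ℕ} (W : Matrix (Fin n) (Fin n) ℝ) (h : W.det ≠ 0) :
    ∃ σ : Equiv.Perm (Fin n), ∀ i, W (σ i) i ≠ 0 := by
  by_contra hcon
  push_neg at hcon
  apply h
  rw [Matrix.det_apply']
  refine Finset.sum_eq_zero fun σ _ => ?_
  obtain ⟨i, hi⟩ := hcon σ
  rw [show (∏ i, W (σ i) i) = 0 from Finset.prod_eq_zero (Finset.mem_univ i) hi, mul_zero]


lemma two_mul_matchNum_le_rank (G : SimpleGraph V) (hb : IsBipartite G) (hc : C4kFree G) :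
    2 * matchNum G ≤ (G.adjMatrix ℝ).rank := by
  obtain ⟨s, hbs⟩ := hb
  obtain ⟨M, hM, hMcard⟩ := exists_maximum_matching G
  set ν := matchNum G with hν
  obtain ⟨p, q, hpinj, hqinj, hp, hq, hMadj⟩ := matching_repr G hbs hM hMcard
  have hGadj : ∀ i, G.Adj (p i) (q i) := fun i => (hMadj i).adj_sub
  have hdisj : ∀ i j, p i ≠ q j := fun i j h => hq j (h ▸ hp i)
  set A := G.adjMatrix ℝ with hA
  set N : Matrix (Fin ν) (Fin ν) ℝ := A.submatrix p q with hN
  have hentry : ∀ i j, N i j = if G.Adj (p i) (q j) then (1 : ℝ) else 0 := by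
    intro i j
    rw [hN, Matrix.submatrix_apply, hA, SimpleGraph.adjMatrix_apply]
  have hdet : N.det ≠ 0 := by
    rw [Matrix.det_apply']
    have hterm : ∀ σ : Equiv.Perm (Fin ν), (↑↑(Equiv.Perm.sign σ) * ∏ i, N (σ i) i : ℝ)
        = if ∀ i, G.Adj (p (σ i)) (q i) then 1 else 0 := by
      intro σ
      by_cases hσ : ∀ i, G.Adj (p (σ i)) (q i)
      · rw [if_pos hσ]
        have hsign := sign_eq_one G hc p q hpinj hqinj hdisj hGadj σ hσ
        have hprod : (∏ i, N (σ i) i) = 1 :=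
          Finset.prod_eq_one (fun i _ => by rw [hentry, if_pos (hσ i)])
        rw [hprod, hsign]
        norm_num
      · rw [if_neg hσ]
        push_neg at hσ
        obtain ⟨i, hi⟩ := hσ
        have hzero : N (σ i) i = 0 := by rw [hentry, if_neg hi]
        rw [show (∏ i, N (σ i) i) = 0 from
          Finset.prod_eq_zero (Finset.mem_univ i) hzero, mul_zero]
    rw [Finset.sum_congr rfl (fun σ _ => hterm σ), Finset.sum_boole]
    have hone : (1 : Equiv.Perm (Fin ν)) ∈
        Finset.univ.filter (fun σ : Equiv.Perm (Fin ν) => ∀ i, G.Adj (p (σ i)) (q i)) := by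
      simp only [Finset.mem_filter, Finset.mem_univ, true_and, Equiv.Perm.coe_one, id_eq]
      exact hGadj
    have hpos : 0 < (Finset.univ.filter
        (fun σ : Equiv.Perm (Fin ν) => ∀ i, G.Adj (p (σ i)) (q i))).card :=
      Finset.card_pos.mpr ⟨1, hone⟩
    exact Nat.cast_ne_zero.mpr (by omega)
  set e : Fin ν ⊕ Fin ν → V := Sum.elim p q with he
  set N2 := A.submatrix e e with hN2
  have hzero_of_adj : ∀ x y : V, x ∈ s → y ∈ s → A x y = 0 := by
    intro x y hx hy
    rw [hA, SimpleGraph.adjMatrix_apply, if_neg]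
    intro hadj
    exact (hbs hadj).mp hx hy
  have hzero_of_nadj : ∀ x y : V, x ∉ s → y ∉ s → A x y = 0 := by
    intro x y hx hy
    rw [hA, SimpleGraph.adjMatrix_apply, if_neg]
    intro hadj
    exact hx ((hbs hadj).mpr hy)
  have hsymmA : ∀ x y : V, A x y = A y x := by
    intro x y
    rw [hA, SimpleGraph.adjMatrix_apply, SimpleGraph.adjMatrix_apply]
    simp [SimpleGraph.adj_comm]
  have hblock : N2 = Matrix.fromBlocks 0 N Nᵀ 0 := by
    ext x y
    rcases x with i | i <;> rcases y with j | j
    · show A (p i) (p j) = 0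
      exact hzero_of_adj _ _ (hp i) (hp j)
    · rfl
    · show A (q i) (p j) = Nᵀ i j
      rw [Matrix.transpose_apply]
      show A (q i) (p j) = A (p j) (q i)
      exact hsymmA _ _
    · show A (q i) (q j) = 0
      exact hzero_of_nadj _ _ (hq i) (hq j)
  have hdet2 : N2.det ≠ 0 := by
    have hperm : N2.submatrix (Equiv.sumComm (Fin ν) (Fin ν)) id =
        Matrix.fromBlocks Nᵀ 0 0 N := by
      rw [hblock]
      ext x y
      rcases x with i | i <;> rcases y with j | j <;> rfl
    have hdp := Matrix.det_permute
      ((Equiv.sumComm (Fin ν) (Fin ν)) : Equiv.Perm (Fin ν ⊕ Fin ν)) N2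
    rw [hperm, Matrix.det_fromBlocks_zero₂₁, Matrix.det_transpose] at hdp
    intro h0
    rw [h0, mul_zero] at hdp
    exact hdet (mul_self_eq_zero.mp hdp)
  have hunit : IsUnit N2 := (Matrix.isUnit_iff_isUnit_det N2).mpr
    (isUnit_iff_ne_zero.mpr hdet2)
  have hrank : N2.rank = ν + ν := by
    rw [Matrix.rank_of_isUnit N2 hunit]
    simp
  have hle : N2.rank ≤ A.rank := by
    rw [hN2]
    exact rank_submatrix_le' A e e
  omega

lemma rank_le_two_mul_matchNum (G : SimpleGraph V) (hb : IsBipartite G) :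
    (G.adjMatrix ℝ).rank ≤ 2 * matchNum G := by
  obtain ⟨s, hbs⟩ := hb
  set A := G.adjMatrix ℝ with hA
  set E : ↥s ⊕ ↥(sᶜ : Set V) ≃ V := Equiv.Set.sumCompl s with hE
  set B : Matrix ↥s ↥(sᶜ : Set V) ℝ :=
    Matrix.of (fun (u : ↥s) (w : ↥(sᶜ : Set V)) => A ↑u ↑w) with hB
  have h1 : A.rank = (A.submatrix E E).rank := (Matrix.rank_submatrix A E E).symm
  have hEinl : ∀ u : ↥s, E (Sum.inl u) = ↑u := fun u => Equiv.Set.sumCompl_apply_inl s u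
  have hEinr : ∀ u : ↥(sᶜ : Set V), E (Sum.inr u) = ↑u := fun u =>
    Equiv.Set.sumCompl_apply_inr s u
  have hzero_of_adj : ∀ x y : V, x ∈ s → y ∈ s → A x y = 0 := by
    intro x y hx hy
    rw [hA, SimpleGraph.adjMatrix_apply, if_neg]
    intro hadj
    exact (hbs hadj).mp hx hy
  have hzero_of_nadj : ∀ x y : V, x ∉ s → y ∉ s → A x y = 0 := by
    intro x y hx hy
    rw [hA, SimpleGraph.adjMatrix_apply, if_neg]
    intro hadj
    exact hx ((hbs hadj).mpr hy)
  have hsymmA : ∀ x y : V, A x y = A y x := by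
    intro x y
    rw [hA, SimpleGraph.adjMatrix_apply, SimpleGraph.adjMatrix_apply]
    simp [SimpleGraph.adj_comm]
  have hblock : A.submatrix E E = Matrix.fromBlocks 0 B Bᵀ 0 := by
    ext x y
    rcases x with u | u <;> rcases y with w | w
    · show A (E (Sum.inl u)) (E (Sum.inl w)) = 0
      rw [hEinl, hEinl]
      exact hzero_of_adj _ _ u.2 w.2
    · show A (E (Sum.inl u)) (E (Sum.inr w)) = B u w
      rw [hEinl, hEinr]
      rfl
    · show A (E (Sum.inr u)) (E (Sum.inl w)) = Bᵀ u w
      rw [hEinr, hEinl, Matrix.transpose_apply]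
      show A ↑u ↑w = B w u
      rw [hB]
      exact hsymmA _ _
    · show A (E (Sum.inr u)) (E (Sum.inr w)) = 0
      rw [hEinr, hEinr]
      exact hzero_of_nadj _ _ u.2 w.2
  have h2 : (Matrix.fromBlocks 0 B Bᵀ 0).rank ≤ B.rank + Bᵀ.rank :=
    rank_fromBlocks_zero_le B Bᵀ
  have h3 : Bᵀ.rank = B.rank := Matrix.rank_transpose B
  have h4 : B.rank ≤ matchNum G := by
    obtain ⟨f, g, hfinj, hginj, hdet⟩ := exists_nonsingular_submatrix B rfl
    obtain ⟨σ, hσ⟩ := exists_perm_of_det_ne_zero _ hdet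
    have hadj : ∀ k, G.Adj ↑(f (σ k)) ↑(g k) := by
      intro k
      have hk := hσ k
      rw [Matrix.submatrix_apply] at hk
      by_contra hna
      apply hk
      show A ↑(f (σ k)) ↑(g k) = 0
      rw [hA, SimpleGraph.adjMatrix_apply, if_neg hna]
    obtain ⟨M, hMm, hMc⟩ := matching_of_edges G
      (fun k => (↑(f (σ k)) : V)) (fun k => (↑(g k) : V))
      (Subtype.val_injective.comp (hfinj.comp σ.injective))
      (Subtype.val_injective.comp hginj)
      (fun k l h => by
        replace h : (↑(f (σ k)) : V) = ↑(g l) := h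
        exact (g l).2 (h ▸ (f (σ k)).2))
      hadj
    rw [← hMc]
    exact ncard_le_matchNum G hMm
  calc A.rank = (A.submatrix E E).rank := h1
    _ = (Matrix.fromBlocks 0 B Bᵀ 0).rank := by rw [hblock]
    _ ≤ B.rank + Bᵀ.rank := h2
    _ = 2 * B.rank := by rw [h3]; ring
    _ ≤ 2 * matchNum G := by omega


end AuxLemmas

/-- the rank of a `C_{4k}`-free bipartite graph is twice its matching number. -/
theorem stmt14 (G : SimpleGraph V) (hb : IsBipartite G) (hc : C4kFree G) :
    rk G = 2 * matchNum G := by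
  have h1 : rk G = (G.adjMatrix ℝ).rank := rfl
  rw [h1]
  exact le_antisymm (rank_le_two_mul_matchNum G hb) (two_mul_matchNum_le_rank G hb hc)

end C4kPaper
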